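/- arXiv:0709.1971 — 2 statements merged into one kernel-verified Lean document; each statement's English description precedes it below -/
import Mathlib

section
/- Let μ, ν be compositions of n and let O^μ_ν denote the set of cosets c ∈ S_n/S_ν such that every w ∈ c lies in the set of shortest representatives of S_μ\S_n. Then the map sending w ∈ O^μ_ν to ψ_ν(wT^μ) (replace the first ν₁ entries 1,…,ν₁ by 1's, the next ν₂ entries by 2's, etc.) is a bijection from O^μ_ν onto the set of column-strict fillings of D^μ of type ν. -/
/-- The Coxeter length of a permutation of `Fin n`: its number of inversions. -/
def permLength {n : ℕ} (w : Equiv.Perm (Fin n)) : ℕ :=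
  (Finset.univ.filter fun p : Fin n × Fin n => p.1 < p.2 ∧ w p.2 < w p.1).card

/-- The column (block) of position `b` for the composition `μ`. -/
def blockOf {n k : ℕ} (μ : Fin k → ℕ) (b : Fin n) : ℕ :=
  (Finset.univ.filter fun c : Fin k =>
    (∑ c' ∈ Finset.univ.filter (· ≤ c), μ c') ≤ (b : ℕ)).card

/-- Membership in the Young subgroup `S_ν`: `u` preserves each `ν`-block. -/
def InYoung {n k : ℕ} (ν : Fin k → ℕ) (u : Equiv.Perm (Fin n)) : Prop :=
  ∀ b : Fin n, blockOf ν (u b) = blockOf ν b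

/-- `w` is a shortest coset representative in `S_μ\S_n`. -/
def IsMinRep {n k : ℕ} (μ : Fin k → ℕ) (w : Equiv.Perm (Fin n)) : Prop :=
  ∀ u : Equiv.Perm (Fin n), InYoung μ u → permLength w ≤ permLength (u * w)

/-- `w` represents a coset in `O^μ_ν ⊆ S_n/S_ν`: every element of `w S_ν` is a
shortest representative of its coset in `S_μ\S_n`. -/
def InO {n k : ℕ} (μ ν : Fin k → ℕ) (w : Equiv.Perm (Fin n)) : Prop :=
  ∀ u : Equiv.Perm (Fin n), InYoung ν u → IsMinRep μ (w * u)

/-- `ψ_ν(w T^μ)`: the filling of `D^μ` whose entry at box `b` is obtained from the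
entry `w⁻¹ b` of `w T^μ` by collapsing consecutive blocks of values of sizes
`ν 0, ν 1, …`. -/
def Psi {n k : ℕ} (ν : Fin k → ℕ) (w : Equiv.Perm (Fin n)) : Fin n → ℕ :=
  fun b => blockOf ν (w⁻¹ b)

/-- `f` is a column-strict filling of `D^μ` of type `ν`: entries strictly increase
down each column, and the value `c` occurs exactly `ν c` times. -/
def ColStrict {n k : ℕ} (μ ν : Fin k → ℕ) (f : Fin n → ℕ) : Prop :=
  (∀ i j : Fin n, i < j → blockOf μ i = blockOf μ j → f i < f j) ∧
    ∀ c : Fin k, (Finset.univ.filter fun b : Fin n => f b = (c : ℕ)).card = ν c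

/-!
Because the blocks of `μ` are intervals, `w` is a shortest representative of `S_μ w` iff `w⁻¹`
is increasing on every `μ`-block: a pair inverted inside a block forces a pair of consecutive
values inverted inside that block, and the adjacent transposition exchanging them lies in `S_μ`
and removes exactly one inversion. Every element of `w S_ν` has this property iff
`ψ_ν(w T^μ) = blockOf ν ∘ w⁻¹` strictly increases along every column, i.e. is column-strict.
The fibres of `w ↦ blockOf ν ∘ w⁻¹` are the cosets `w S_ν`, and a filling of type `ν` has
fibres of the same sizes as `blockOf ν`, so it is `blockOf ν ∘ e` for a bijection `e`.
-/

open Finset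

lemma lt_or_eq_of_swap_lt_swap {α : Type*} [LinearOrder α] {c d x y : α} (hcd : c ⋖ d)
    (h : Equiv.swap c d y < Equiv.swap c d x) : y < x ∨ x = c ∧ y = d := by
  have hlt := hcd.lt
  have hle : y < d → y ≤ c := hcd.le_of_lt
  have hge : c < x → d ≤ x := hcd.ge_of_gt
  rw [Equiv.swap_apply_def, Equiv.swap_apply_def] at h
  split_ifs at h <;> subst_vars <;> grind

lemma permLength_swap_mul_lt {n : ℕ} {w : Equiv.Perm (Fin n)} {c d : Fin n} (hcd : c ⋖ d)
    (h : w⁻¹ d < w⁻¹ c) : permLength (Equiv.swap c d * w) < permLength w := by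
  unfold permLength
  refine card_lt_card <| (ssubset_iff_of_subset <| monotone_filter_right _ fun p _ hp => ?_).2
    ⟨(w⁻¹ d, w⁻¹ c), ?_, ?_⟩
  · simp only [Equiv.Perm.mul_apply] at hp
    refine ⟨hp.1, (lt_or_eq_of_swap_lt_swap hcd hp.2).resolve_right ?_⟩
    rintro ⟨h1, h2⟩
    have := hp.1
    rw [← w.symm_apply_apply p.1, ← w.symm_apply_apply p.2, h1, h2] at this
    exact lt_asymm h this
  · simp only [mem_filter_univ, Equiv.Perm.inv_def, Equiv.apply_symm_apply]
    exact ⟨h, hcd.lt⟩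
  · rw [mem_filter_univ]
    simp only [Equiv.Perm.mul_apply, Equiv.Perm.inv_def, Equiv.apply_symm_apply,
      Equiv.swap_apply_left, Equiv.swap_apply_right]
    exact fun hmem => hcd.lt.not_gt hmem.2

lemma lt_of_sum_card_filter_eq {α : Type*} [Fintype α] {k : ℕ} (g : α → ℕ)
    (h : ∑ c : Fin k, #{a | g a = c} = Fintype.card α) (a : α) : g a < k := by
  have hcard : #{a | g a < k} = #(univ : Finset α) := by
    rw [card_eq_sum_card_fiberwise (f := g) (t := range k) (fun a ha => by simpa using ha),
      card_univ, ← h, ← Fin.sum_univ_eq_sum_range]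
    refine sum_congr rfl fun c _ => congrArg card ?_
    ext a
    simp only [mem_filter, mem_univ, true_and, and_iff_right_iff_imp]
    exact fun ha => ha ▸ c.isLt
  exact card_filter_eq_iff.1 hcard a (mem_univ a)

lemma exists_equiv_apply_eq_of_card_filter_eq {α β γ : Type*} [Fintype α] [Fintype β]
    [DecidableEq γ] (f : α → γ) (g : β → γ) (h : ∀ c, #{a | f a = c} = #{b | g b = c}) :
    ∃ e : α ≃ β, ∀ a, g (e a) = f a :=
  ⟨Equiv.ofFiberEquiv fun c => Fintype.equivOfCardEq <| by
    simpa only [Fintype.card_subtype] using h c, Equiv.ofFiberEquiv_map _⟩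

section Blocks

variable {n k : ℕ} (ν : Fin k → ℕ)

lemma blockOf_mono : Monotone (blockOf (n := n) ν) := fun _ _ h =>
  card_le_card fun _ hc => by
    simp only [mem_filter, mem_univ, true_and] at hc ⊢
    exact hc.trans h

lemma lt_blockOf_iff (b : Fin n) (c : Fin k) :
    (c : ℕ) < blockOf ν b ↔ ∑ x ∈ Iic c, ν x ≤ b := by
  have hmono : Monotone fun c : Fin k => ∑ x ∈ Iic c, ν x := fun _ _ h =>
    sum_le_sum_of_subset (Iic_subset_Iic.2 h)
  simp only [blockOf, filter_ge_eq_Iic]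
  constructor
  · intro h
    by_contra hc
    have hsub : ({c' : Fin k | ∑ x ∈ Iic c', ν x ≤ b} : Finset (Fin k)) ⊆ Iio c :=
      fun c' hc' => by
        simp only [mem_filter, mem_univ, true_and] at hc'
        exact mem_Iio.2 <| lt_of_not_ge fun h' => hc <| (hmono h').trans hc'
    have := card_le_card hsub
    rw [Fin.card_Iio] at this
    omega
  · intro h
    calc (c : ℕ) < #(Iic c) := by simp
      _ ≤ _ := card_le_card fun c' hc' =>
        mem_filter.2 ⟨mem_univ _, (hmono (mem_Iic.1 hc')).trans h⟩

lemma le_blockOf_iff (b : Fin n) (c : Fin k) :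
    (c : ℕ) ≤ blockOf ν b ↔ ∑ x ∈ Iio c, ν x ≤ b := by
  obtain ⟨_ | c, hc⟩ := c
  · have : Iio (⟨0, hc⟩ : Fin k) = ∅ := by ext x; simp [Fin.lt_def]
    simp [this]
  · have : Iio (⟨c + 1, hc⟩ : Fin k) = Iic ⟨c, by omega⟩ := by
      ext x; simp [Fin.lt_def, Fin.le_def]
    rw [this, ← lt_blockOf_iff]
    exact Nat.succ_le_iff

lemma blockOf_eq_iff (b : Fin n) (c : Fin k) :
    blockOf ν b = c ↔ ∑ x ∈ Iio c, ν x ≤ b ∧ b < ∑ x ∈ Iio c, ν x + ν c := by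
  rw [← le_blockOf_iff, sum_Iio_add_eq_sum_Iic, ← not_le, ← lt_blockOf_iff]
  omega

lemma card_filter_blockOf_eq (hν : ∑ c, ν c ≤ n) (c : Fin k) :
    #{b : Fin n | blockOf ν b = c} = ν c := by
  set s := ∑ x ∈ Iio c, ν x
  have hs : s + ν c ≤ n := by
    rw [sum_Iio_add_eq_sum_Iic]
    exact (sum_le_sum_of_subset (subset_univ _)).trans hν
  have : ({b : Fin n | blockOf ν b = c} : Finset (Fin n)) = (Ico s (s + ν c)).attachFin
      fun m hm => (mem_Ico.1 hm).2.trans_le hs := by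
    ext b
    simp [blockOf_eq_iff, s]
  rw [this, card_attachFin, Nat.card_Ico]
  omega

end Blocks

section YoungSubgroup

variable {n k : ℕ} {ν : Fin k → ℕ}

lemma InYoung.inv {u : Equiv.Perm (Fin n)} (h : InYoung ν u) : InYoung ν u⁻¹ := fun b => by
  simpa using (h (u⁻¹ b)).symm

lemma InYoung.swap {x y : Fin n} (h : blockOf ν x = blockOf ν y) :
    InYoung ν (Equiv.swap x y) := fun b => by
  rcases eq_or_ne b x with rfl | hbx
  · rw [Equiv.swap_apply_left, h]
  rcases eq_or_ne b y with rfl | hby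
  · rw [Equiv.swap_apply_right, h]
  · rw [Equiv.swap_apply_of_ne_of_ne hbx hby]

end YoungSubgroup

section MinRep

variable {n k : ℕ} {μ : Fin k → ℕ} {w : Equiv.Perm (Fin n)}

lemma isMinRep_of_lt (h : ∀ a b, a < b → blockOf μ a = blockOf μ b → w⁻¹ a < w⁻¹ b) :
    IsMinRep μ w := by
  intro u hu
  unfold permLength
  refine card_le_card <| monotone_filter_right _ fun p _ hp => ?_
  simp only [Equiv.Perm.mul_apply] at hp ⊢
  refine ⟨hp.1, (blockOf_mono μ).reflect_lt ?_⟩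
  rw [hu, hu]
  refine (blockOf_mono μ hp.2.le).lt_of_ne fun hblock => ?_
  have := h _ _ hp.2 hblock
  simp only [Equiv.Perm.inv_def, Equiv.symm_apply_apply] at this
  exact lt_asymm hp.1 this

lemma IsMinRep.lt (h : IsMinRep μ w) {a b : Fin n} (hab : a < b)
    (hblock : blockOf μ a = blockOf μ b) : w⁻¹ a < w⁻¹ b := by
  have hconn : {x : Fin n | blockOf μ x = blockOf μ b}.OrdConnected :=
    Set.ordConnected_singleton.preimage_mono (blockOf_mono μ)
  refine strictMonoOn_of_lt_succ hconn (fun c hc hcb hsb => ?_) hblock rfl hab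
  by_contra! hle
  have hcov := Order.covBy_succ_of_not_isMax hc
  have hlt : w⁻¹ (Order.succ c) < w⁻¹ c := hle.lt_of_ne (w⁻¹.injective.ne hcov.lt.ne')
  exact (h _ (InYoung.swap (hcb.trans hsb.symm))).not_gt (permLength_swap_mul_lt hcov hlt)

theorem inO_iff {ν : Fin k → ℕ} :
    InO μ ν w ↔ ∀ a b, a < b → blockOf μ a = blockOf μ b → Psi ν w a < Psi ν w b := by
  constructor
  · intro h a b hab hblock
    have hw : w⁻¹ a < w⁻¹ b := (by simpa using h 1 fun _ => rfl : IsMinRep μ w).lt hab hblock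
    refine (blockOf_mono ν hw.le).lt_of_ne fun hPsi => ?_
    -- `w * swap (w⁻¹ a) (w⁻¹ b)` lies in `w S_ν` and puts `a`, `b` in the wrong order
    have := (h _ (InYoung.swap hPsi)).lt hab hblock
    simp only [mul_inv_rev, Equiv.swap_inv, Equiv.Perm.mul_apply, Equiv.swap_apply_left,
      Equiv.swap_apply_right] at this
    exact lt_asymm hw this
  · intro h u hu
    refine isMinRep_of_lt fun a b hab hblock => (blockOf_mono ν).reflect_lt ?_
    rw [mul_inv_rev, Equiv.Perm.mul_apply, Equiv.Perm.mul_apply, hu.inv, hu.inv]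
    exact h a b hab hblock

end MinRep

section Psi

variable {n k : ℕ} {ν : Fin k → ℕ}

lemma card_filter_psi_eq (w : Equiv.Perm (Fin n)) (c : ℕ) :
    #{b | Psi ν w b = c} = #{b : Fin n | blockOf ν b = c} :=
  card_equiv w⁻¹ fun b => by rw [mem_filter_univ, mem_filter_univ]; rfl

lemma psi_eq_psi_iff (w w' : Equiv.Perm (Fin n)) :
    Psi ν w = Psi ν w' ↔ ∃ u, InYoung ν u ∧ w' = w * u := by
  constructor
  · intro h
    refine ⟨w⁻¹ * w', fun b => ?_, by group⟩
    simpa [Psi] using congrFun h (w' b)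
  · rintro ⟨u, hu, rfl⟩
    funext b
    simp only [Psi, mul_inv_rev, Equiv.Perm.mul_apply]
    exact (hu.inv _).symm

lemma exists_psi_eq (hν : ∑ c, ν c = n) (f : Fin n → ℕ)
    (hf : ∀ c : Fin k, #{b | f b = c} = ν c) : ∃ w, Psi ν w = f := by
  have hfiber := card_filter_blockOf_eq ν hν.le
  have hf_lt := lt_of_sum_card_filter_eq f <| by
    rw [sum_congr rfl fun c _ => hf c, hν, Fintype.card_fin]
  have hblockOf_lt := lt_of_sum_card_filter_eq (blockOf ν) <| by
    rw [sum_congr rfl fun c _ => hfiber c, hν, Fintype.card_fin]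
  obtain ⟨e, he⟩ := exists_equiv_apply_eq_of_card_filter_eq f (blockOf ν) fun c => by
    by_cases hc : c < k
    · exact (hf ⟨c, hc⟩).trans (hfiber ⟨c, hc⟩).symm
    · rw [filter_false_of_mem fun b _ => ((hf_lt b).trans_le (not_lt.1 hc)).ne,
        filter_false_of_mem fun b _ => ((hblockOf_lt b).trans_le (not_lt.1 hc)).ne]
  exact ⟨e⁻¹, funext fun b => by simp [Psi, he]⟩

end Psi

theorem psi_bijection_general (n k : ℕ) (μ ν : Fin k → ℕ)
    (hν : ∑ c, ν c = n) :
    (∀ w : Equiv.Perm (Fin n), InO μ ν w → ColStrict μ ν (Psi ν w)) ∧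
      (∀ w w' : Equiv.Perm (Fin n), InO μ ν w → InO μ ν w' →
        (Psi ν w = Psi ν w' ↔ ∃ u, InYoung ν u ∧ w' = w * u)) ∧
      (∀ f : Fin n → ℕ, ColStrict μ ν f → ∃ w, InO μ ν w ∧ Psi ν w = f) := by
  refine ⟨fun w hw => ⟨inO_iff.1 hw, fun c => ?_⟩, fun w w' _ _ => psi_eq_psi_iff w w',
    fun f hf => ?_⟩
  · rw [card_filter_psi_eq, card_filter_blockOf_eq ν hν.le]
  · obtain ⟨w, rfl⟩ := exists_psi_eq hν f hf.2
    exact ⟨w, inO_iff.2 hf.1, rfl⟩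

/-- the map `w ↦ ψ_ν(w T^μ)` gives a bijection from the set of cosets
`O^μ_ν` onto the set of column-strict fillings of `D^μ` of type `ν`: it takes values
in column-strict fillings, two elements have the same image iff they lie in the same
coset of `S_ν`, and every column-strict filling of type `ν` is in the image. -/
theorem psi_bijection (n k : ℕ) (μ ν : Fin k → ℕ)
    (hμ : ∑ c, μ c = n) (hν : ∑ c, ν c = n) :
    (∀ w : Equiv.Perm (Fin n), InO μ ν w → ColStrict μ ν (Psi ν w)) ∧
      (∀ w w' : Equiv.Perm (Fin n), InO μ ν w → InO μ ν w' →
        (Psi ν w = Psi ν w' ↔ ∃ u, InYoung ν u ∧ w' = w * u)) ∧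
      (∀ f : Fin n → ℕ, ColStrict μ ν f → ∃ w, InO μ ν w ∧ Psi ν w = f) :=
  psi_bijection_general n k μ ν hν
end

section
/- Let x ∈ S_{2k} (k ≥ 2) be the permutation with values (2k, k, k−1, …, 3, 1, 2k−1, 2k−2, …, k+1, 2) at positions 1,…,2k. Then the longest strictly decreasing subsequence of this sequence has length k+1; hence the Robinson–Schensted insertion tableau of x has exactly k+1 rows. -/
/-- Schensted row insertion of `a` into a single row. -/
def bump (a : ℕ) : List ℕ → List ℕ × Option ℕ
  | [] => ([a], none)
  | x :: xs =>
      if a < x then (a :: xs, some x)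
      else
        let p := bump a xs
        (x :: p.1, p.2)

/-- Schensted insertion of `a` into a tableau (list of rows, top row first). -/
def insertTableau : List (List ℕ) → ℕ → List (List ℕ)
  | [], a => [[a]]
  | r :: rs, a =>
      match bump a r with
      | (r', none) => r' :: rs
      | (r', some b) => r' :: insertTableau rs b

/-- The Robinson–Schensted insertion tableau of a word. -/
def RSInsertion (w : List ℕ) : List (List ℕ) := w.foldl insertTableau []

/-- The word `(2k, k, k−1, …, 3, 1, 2k−1, 2k−2, …, k+1, 2)` of length `2k`. -/
def word7 (k : ℕ) : List ℕ :=
  [2 * k] ++ ((List.range (k - 2)).map fun i => k - i) ++ [1] ++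
    ((List.range (k - 1)).map fun i => 2 * k - 1 - i) ++ [2]

/-!
Write the word as `L ++ R` with `L = (2k, k, k-1, …, 3, 1)` and `R = (2k-1, …, k+1, 2)`, each of
length `k`. A strictly decreasing subsequence taking two letters from `L` has its second letter
`≤ k`, so from `R` it can only continue with the letter `2`; otherwise it takes at most one letter
from `L`. Either way it has at most `k + 1` letters, and `2k, 2k-1, …, k+1, 2` has exactly
`k + 1`.

The insertion tableau is computed directly. `L` is inserted as the single column
`1, 3, 4, …, k, 2k`. Every letter of `R` but the last becomes the new top of the second column,
pushing that column one row down, so the second column stays a run of consecutive integers. The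
last letter `2` pushes the full second column down once more, which bumps `2k` into a new row.
-/

lemma insertTableau_column {a : ℕ} {c : List ℕ} (h : (a :: c).Pairwise (· < ·)) :
    insertTableau (c.map ([·])) a = (a :: c).map ([·]) := by
  induction c generalizing a with
  | nil => rfl
  | cons b c ih =>
    obtain ⟨hac, hc⟩ := List.pairwise_cons.1 h
    simp [insertTableau, bump, hac b List.mem_cons_self, ih hc]

lemma foldl_insertTableau_column {w c : List ℕ} (h : (w.reverse ++ c).Pairwise (· < ·)) :
    w.foldl insertTableau (c.map ([·])) = (w.reverse ++ c).map ([·]) := by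
  induction w generalizing c with
  | nil => simp
  | cons a w ih =>
    rw [List.reverse_cons, List.append_assoc, List.singleton_append] at h ⊢
    rw [List.foldl_cons, insertTableau_column (h.sublist (List.sublist_append_right _ _)), ih h]

lemma insertTableau_singleton_cons {a v : ℕ} (h : a ≤ v) (rest : List (List ℕ)) :
    insertTableau ([a] :: rest) v = [a, v] :: rest := by
  simp [insertTableau, bump, Nat.not_lt.2 h]

lemma insertTableau_pair_cons {a b v : ℕ} (hav : a ≤ v) (hvb : v < b) (rest : List (List ℕ)) :
    insertTableau ([a, b] :: rest) v = [a, v] :: insertTableau rest b := by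
  simp [insertTableau, bump, Nat.not_lt.2 hav, hvb]

def pairRows : ℕ → ℕ → ℕ → List (List ℕ)
  | _, _, 0 => []
  | a, b, n + 1 => [a, b] :: pairRows (a + 1) (b + 1) n

lemma length_pairRows (a b n : ℕ) : (pairRows a b n).length = n := by
  induction n generalizing a b with
  | zero => rfl
  | succ n ih => simp [pairRows, ih]

lemma pairRows_succ (a b n : ℕ) : pairRows a b (n + 1) = pairRows a b n ++ [[a + n, b + n]] := by
  induction n generalizing a b with
  | zero => rfl
  | succ n ih => rw [pairRows, ih, pairRows]; simp [Nat.add_right_comm, Nat.add_assoc]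

lemma insertTableau_pairRows_append {a v : ℕ} (h : a ≤ v) (n : ℕ) (rest : List (List ℕ)) :
    insertTableau (pairRows a (v + 1) n ++ rest) v =
      pairRows a v n ++ insertTableau rest (v + n) := by
  induction n generalizing a v with
  | zero => rfl
  | succ n ih =>
    rw [pairRows, List.cons_append, insertTableau_pair_cons h (Nat.lt_succ_self v),
      ih (Nat.add_le_add_right h 1), pairRows, List.cons_append, Nat.add_right_comm v 1 n]
    rfl

def word7Left (k : ℕ) : List ℕ := [2 * k] ++ (List.range (k - 2)).map (fun i => k - i) ++ [1]

def word7Right (k : ℕ) : List ℕ := (List.range (k - 1)).map (fun i => 2 * k - 1 - i) ++ [2]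

lemma word7_eq_append (k : ℕ) : word7 k = word7Left k ++ word7Right k := by
  simp [word7, word7Left, word7Right]

lemma reverse_word7Left {k : ℕ} (hk : 2 ≤ k) :
    (word7Left k).reverse = 1 :: List.range' 3 (k - 2) ++ [2 * k] := by
  have : (List.range (k - 2)).map (fun i => k - i) = (List.range' 3 (k - 2)).reverse := by
    rw [List.reverse_range']
    exact List.map_congr_left fun i _ => by omega
  simp [word7Left, this]

lemma foldl_insertTableau_word7Left {k : ℕ} (hk : 2 ≤ k) :
    (word7Left k).foldl insertTableau [] =
      [1] :: ((List.range' 3 (k - 2)).map ([·]) ++ [[2 * k]]) := by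
  have hsorted : (1 :: List.range' 3 (k - 2) ++ [2 * k]).Pairwise (· < ·) := by
    grind [List.pairwise_cons, List.pairwise_lt_range']
  simpa [reverse_word7Left hk] using
    foldl_insertTableau_column (w := word7Left k) (c := [])
      (by rwa [List.append_nil, reverse_word7Left hk])

lemma foldl_insertTableau_word7Right_prefix {k : ℕ} (m : ℕ) (hm : m + 2 ≤ k) :
    ((List.range (m + 1)).map fun i => 2 * k - 1 - i).foldl insertTableau
        ([1] :: ((List.range' 3 (k - 2)).map ([·]) ++ [[2 * k]])) =
      [1, 2 * k - 1 - m] ::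
        (pairRows 3 (2 * k - m) m ++ (List.range' (m + 3) (k - 2 - m)).map ([·]) ++
          [[2 * k]]) := by
  induction m with
  | zero => simp [insertTableau_singleton_cons (by omega : 1 ≤ 2 * k - 1), pairRows]
  | succ m ih =>
    have hrange : List.range' (m + 3) (k - 2 - m) =
        (m + 3) :: List.range' (m + 1 + 3) (k - 2 - (m + 1)) := by
      rw [show k - 2 - m = k - 2 - (m + 1) + 1 by omega, List.range'_succ]
    have hpair : pairRows 3 (2 * k - m) m = pairRows 3 (2 * k - 1 - m + 1) m := by congr 1; omega
    rw [List.range_succ, List.map_append, List.foldl_append, ih (by omega), List.map_singleton,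
      List.foldl_cons, List.foldl_nil, insertTableau_pair_cons (by omega) (by omega), hpair,
      List.append_assoc, insertTableau_pairRows_append (by omega), hrange, List.map_cons,
      List.cons_append, insertTableau_singleton_cons (by omega), pairRows_succ]
    rw [show 2 * k - (m + 1) = 2 * k - 1 - m by omega, Nat.add_comm 3 m]
    simp

lemma length_RSInsertion_word7 {k : ℕ} (hk : 2 ≤ k) :
    (RSInsertion (word7 k)).length = k + 1 := by
  have hright : word7Right k = ((List.range (k - 2 + 1)).map fun i => 2 * k - 1 - i) ++ [2] := by
    rw [word7Right, show k - 1 = k - 2 + 1 by omega]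
  have hprefix := foldl_insertTableau_word7Right_prefix (k := k) (k - 2) (by omega)
  rw [show 2 * k - 1 - (k - 2) = k + 1 by omega, show 2 * k - (k - 2) = k + 1 + 1 by omega,
    Nat.sub_self, List.range'_zero, List.map_nil, List.append_nil] at hprefix
  have hlast : insertTableau [[2 * k]] (k + 1 + (k - 2)) = [[k + 1 + (k - 2)], [2 * k]] := by
    simp [insertTableau, bump, show k + 1 + (k - 2) < 2 * k by omega]
  rw [RSInsertion, word7_eq_append, List.foldl_append, foldl_insertTableau_word7Left hk, hright,
    List.foldl_append, hprefix, List.foldl_cons, List.foldl_nil,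
    insertTableau_pair_cons (by omega) (by omega), insertTableau_pairRows_append (by omega), hlast]
  simp only [List.length_cons, List.length_append, length_pairRows, List.length_nil]
  omega

lemma length_word7Left {k : ℕ} (hk : 2 ≤ k) : (word7Left k).length = k := by
  simp only [word7Left, List.length_append, List.length_singleton, List.length_map,
    List.length_range]
  omega

lemma length_word7Right {k : ℕ} (hk : 1 ≤ k) : (word7Right k).length = k := by
  simp only [word7Right, List.length_append, List.length_singleton, List.length_map,
    List.length_range]
  omega

lemma mem_word7Left {k x : ℕ} (hk : 1 ≤ k) (hx : x ∈ word7Left k) :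
    x = 2 * k ∨ x ≤ k := by
  simp only [word7Left, List.mem_append, List.mem_singleton, List.mem_map, List.mem_range] at hx
  rcases hx with (rfl | ⟨i, hi, rfl⟩) | rfl <;> omega

lemma mem_word7Right {k x : ℕ} (hx : x ∈ word7Right k) : k < x ∧ x < 2 * k ∨ x = 2 := by
  simp only [word7Right, List.mem_append, List.mem_singleton, List.mem_map, List.mem_range] at hx
  rcases hx with ⟨i, hi, rfl⟩ | rfl <;> omega

lemma pairwise_gt_word7Right (k : ℕ) : (word7Right k).Pairwise (· > ·) := by
  simp only [word7Right, List.pairwise_append, List.pairwise_map, List.pairwise_singleton,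
    List.mem_map, List.mem_range, List.mem_singleton]
  refine ⟨List.pairwise_lt_range.imp_of_mem fun _ hj _ => ?_, trivial, ?_⟩
  · have := List.mem_range.1 hj; omega
  · rintro _ ⟨i, hi, rfl⟩ _ rfl; omega

lemma exists_pairwise_gt_sublist_word7 {k : ℕ} (hk : 2 ≤ k) :
    ∃ l : List ℕ, l.Sublist (word7 k) ∧ l.Pairwise (· > ·) ∧ l.length = k + 1 := by
  refine ⟨2 * k :: word7Right k, ?_, ?_, ?_⟩
  · rw [word7_eq_append, word7Left, List.append_assoc, List.append_assoc, List.singleton_append]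
    exact (List.sublist_append_of_sublist_right (List.sublist_append_right _ _)).cons_cons _
  · refine List.pairwise_cons.2 ⟨fun x hx => ?_, pairwise_gt_word7Right k⟩
    rcases mem_word7Right hx with h | h <;> omega
  · simp [length_word7Right (by omega : 1 ≤ k)]

lemma length_le_one_of_sublist_word7Right {k : ℕ} {l : List ℕ} (hs : l.Sublist (word7Right k))
    (hl : l.Pairwise (· > ·)) (hlk : ∀ y ∈ l, y ≤ k) : l.length ≤ 1 := by
  have hall : ∀ y ∈ l, y = 2 := fun y hy =>
    (mem_word7Right (hs.subset hy)).resolve_left fun h => by have := hlk y hy; omega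
  exact List.nodup_replicate.1 (List.eq_replicate_iff.2 ⟨rfl, hall⟩ ▸ hl.nodup)

lemma length_le_of_pairwise_gt_sublist_word7 {k : ℕ} (hk : 2 ≤ k) {l : List ℕ}
    (hs : l.Sublist (word7 k)) (hl : l.Pairwise (· > ·)) : l.length ≤ k + 1 := by
  rw [word7_eq_append, List.sublist_append_iff] at hs
  obtain ⟨l₁, l₂, rfl, h₁, h₂⟩ := hs
  obtain ⟨hl₁, hl₂, hl₁₂⟩ := List.pairwise_append.1 hl
  have hlen₁ : l₁.length ≤ k := h₁.length_le.trans_eq (length_word7Left hk)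
  have hlen₂ : l₂.length ≤ k := h₂.length_le.trans_eq (length_word7Right (by omega))
  suffices l₁.length ≤ 1 ∨ l₂.length ≤ 1 by rw [List.length_append]; omega
  match l₁, h₁, hl₁, hl₁₂ with
  | [], _, _, _ | [_], _, _, _ => exact Or.inl (by simp)
  | a :: b :: _, h₁, hl₁, hl₁₂ =>
    have hba : b < a := List.rel_of_pairwise_cons hl₁ (by simp)
    have hbk : b ≤ k := by
      rcases mem_word7Left (by omega) (h₁.subset (by simp : b ∈ _)) with h | h
      · rcases mem_word7Left (by omega) (h₁.subset (by simp : a ∈ _)) with h' | h' <;> omega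
      · exact h
    exact Or.inr (length_le_one_of_sublist_word7Right h₂ hl₂ fun y hy => by
      have := hl₁₂ b (by simp) y hy
      omega)

/-- the longest strictly decreasing subsequence of the sequence
`(2k, k, k−1, …, 3, 1, 2k−1, 2k−2, …, k+1, 2)` has length exactly `k+1`; hence
(Schensted) the Robinson–Schensted insertion tableau has exactly `k+1` rows. -/
theorem rs_word7_exactly_k_plus_one_rows (k : ℕ) (hk : 2 ≤ k) :
    (∃ l : List ℕ, l.Sublist (word7 k) ∧ l.Pairwise (· > ·) ∧ l.length = k + 1) ∧
      (∀ l : List ℕ, l.Sublist (word7 k) → l.Pairwise (· > ·) → l.length ≤ k + 1) ∧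
      (RSInsertion (word7 k)).length = k + 1 :=
  ⟨exists_pairwise_gt_sublist_word7 hk, fun _ => length_le_of_pairwise_gt_sublist_word7 hk,
    length_RSInsertion_word7 hk⟩
end
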